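/- arXiv:2409.10395 — 2 statements merged into one kernel-verified Lean document; each statement's English description precedes it below -/
import Mathlib

section
/- Let α ∈ (0,1], let t ∈ {1,…,n}, and let z_1,…,z_{t−1} be nonnegative reals. Suppose x^t ∈ X is P1-feasible for t and z_1,…,z_{t−1} and satisfies obj_t(x^t) ≥ α·obj_t(x) for every P1-feasible x ∈ X (an α-approximately-optimal solution). Then obj_t(x^t) ≥ obj_t(x) for every P1-feasible x ∈ X_{≤α} (so x^t also satisfies the requirements of an α-shallow solver). -/
open Finset

/-- The vector `v` sorted in non-decreasing order: `sortedVec v i` is the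
`i`-th smallest entry of `v` (counting repetitions). -/
noncomputable def sortedVec {n : ℕ} (v : Fin n → ℝ) : Fin n → ℝ := v ∘ Tuple.sort v

/-- The sum of the `k` smallest entries of `v`. -/
noncomputable def sumSmallest {n : ℕ} (v : Fin n → ℝ) (k : ℕ) : ℝ :=
  ∑ i ∈ Finset.univ.filter (fun i : Fin n => (i : ℕ) < k), sortedVec v i

/-- `v` is weakly leximin-preferred over `w`. -/
def LeximinPref {n : ℕ} (v w : Fin n → ℝ) : Prop :=
  sortedVec v = sortedVec w ∨
    ∃ k : Fin n, (∀ i, i < k → sortedVec v i = sortedVec w i) ∧ sortedVec w k < sortedVec v k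

/-- `v` is strictly leximin-preferred over `w`. -/
def LeximinStrict {n : ℕ} (v w : Fin n → ℝ) : Prop :=
  ∃ k : Fin n, (∀ i, i < k → sortedVec v i = sortedVec w i) ∧ sortedVec w k < sortedVec v k

/-- `x` is a probability distribution over the (finite) set of states `S`. -/
def IsDistribution {S : Type*} [Fintype S] (x : S → ℝ) : Prop :=
  (∀ s, 0 ≤ x s) ∧ ∑ s, x s = 1

/-- The expected utility of each agent under the (sub)distribution `x`. -/
noncomputable def expU {n : ℕ} {S : Type*} [Fintype S] (u : Fin n → S → ℝ) (x : S → ℝ) :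
    Fin n → ℝ := fun i => ∑ s, x s * u i s

/-- Membership in `X_{≤α}`: a distribution that puts at most `α` total probability
on the non-degenerate states. -/
def InXle {S : Type*} [Fintype S] [DecidableEq S] (α : ℝ) (sd : S) (x : S → ℝ) : Prop :=
  IsDistribution x ∧ ∑ j ∈ Finset.univ.erase sd, x j ≤ α

/-- The α-upgrade of a distribution `x` (w.r.t. the degenerate state `sd`). -/
noncomputable def upg {S : Type*} [Fintype S] [DecidableEq S] (α : ℝ) (sd : S) (x : S → ℝ) :
    S → ℝ :=
  fun s => if s = sd then 1 - (1 / α) * ∑ j ∈ Finset.univ.erase sd, x j else (1 / α) * x s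

/-- The α-downgrade of a distribution `x` (w.r.t. the degenerate state `sd`). -/
noncomputable def dng {S : Type*} [Fintype S] [DecidableEq S] (α : ℝ) (sd : S) (x : S → ℝ) :
    S → ℝ :=
  fun s => if s = sd then 1 - α * ∑ j ∈ Finset.univ.erase sd, x j else α * x s

/-! Scaling the non-degenerate part of `x ∈ X_{≤α}` by `1/α` (the α-upgrade) still gives a
distribution, and since the degenerate state is worth nothing, its expected utilities are
`E(x)/α`. Sums of smallest entries scale linearly, so the upgrade stays P1-feasible and its
objective is `S_t(x)/α - Σ z`. Comparing `x^t` with it gives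
`obj_t(x^t) ≥ S_t(x) - α Σ z ≥ obj_t(x)`, as the `z_i` are nonnegative and `α ≤ 1`. -/

section SumSmallest

variable {n : ℕ}

lemma sortedVec_smul (v : Fin n → ℝ) {c : ℝ} (hc : 0 ≤ c) :
    sortedVec (c • v) = c • sortedVec v := by
  have hmono : Monotone ((c • v) ∘ Tuple.sort v) := fun a b hab =>
    mul_le_mul_of_nonneg_left (Tuple.monotone_sort v hab) hc
  rw [sortedVec, ← Tuple.comp_sort_eq_comp_iff_monotone.mpr hmono]
  rfl

lemma sumSmallest_smul (v : Fin n → ℝ) {c : ℝ} (hc : 0 ≤ c) (k : ℕ) :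
    sumSmallest (c • v) k = c * sumSmallest v k := by
  simp only [sumSmallest, sortedVec_smul v hc, Pi.smul_apply, smul_eq_mul, Finset.mul_sum]

lemma sumSmallest_nonneg {v : Fin n → ℝ} (hv : ∀ i, 0 ≤ v i) (k : ℕ) :
    0 ≤ sumSmallest v k :=
  Finset.sum_nonneg fun _ _ => hv _

lemma sumSmallest_le_smul {v : Fin n → ℝ} (hv : ∀ i, 0 ≤ v i) {c : ℝ} (hc : 1 ≤ c) (k : ℕ) :
    sumSmallest v k ≤ sumSmallest (c • v) k := by
  rw [sumSmallest_smul v (zero_le_one.trans hc)]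
  exact le_mul_of_one_le_left (sumSmallest_nonneg hv k) hc

end SumSmallest

section Upgrade

variable {S : Type*} [Fintype S] [DecidableEq S] {α : ℝ} {sd : S} {x : S → ℝ}

lemma upg_self : upg α sd x sd = 1 - α⁻¹ * ∑ j ∈ univ.erase sd, x j := by
  simp [upg]

lemma upg_of_ne {s : S} (hs : s ≠ sd) : upg α sd x s = α⁻¹ * x s := by
  simp [upg, hs]

lemma sum_erase_upg : ∑ s ∈ univ.erase sd, upg α sd x s = α⁻¹ * ∑ s ∈ univ.erase sd, x s := by
  rw [Finset.mul_sum]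
  exact Finset.sum_congr rfl fun s hs => upg_of_ne (Finset.ne_of_mem_erase hs)

lemma isDistribution_upg (hα : 0 < α) (hx : InXle α sd x) : IsDistribution (upg α sd x) := by
  obtain ⟨⟨hx0, -⟩, hxα⟩ := hx
  refine ⟨fun s => ?_, ?_⟩
  · rcases eq_or_ne s sd with rfl | hs
    · rw [upg_self, sub_nonneg, inv_mul_le_iff₀ hα, mul_one]
      exact hxα
    · rw [upg_of_ne hs]
      exact mul_nonneg (inv_nonneg.mpr hα.le) (hx0 s)
  · rw [← Finset.add_sum_erase _ _ (Finset.mem_univ sd), upg_self, sum_erase_upg]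
    ring

lemma expU_eq_sum_erase {n : ℕ} {u : Fin n → S → ℝ} (hud : ∀ i, u i sd = 0) (y : S → ℝ)
    (i : Fin n) : expU u y i = ∑ s ∈ univ.erase sd, y s * u i s := by
  rw [expU, ← Finset.add_sum_erase _ _ (Finset.mem_univ sd), hud, mul_zero, zero_add]

lemma expU_upg {n : ℕ} {u : Fin n → S → ℝ} (hud : ∀ i, u i sd = 0) :
    expU u (upg α sd x) = α⁻¹ • expU u x := by
  funext i
  rw [Pi.smul_apply, smul_eq_mul, expU_eq_sum_erase hud, expU_eq_sum_erase hud, Finset.mul_sum]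
  refine Finset.sum_congr rfl fun s hs => ?_
  rw [upg_of_ne (Finset.ne_of_mem_erase hs), mul_assoc]

end Upgrade

theorem stmt11_general {n : ℕ} {S : Type*} [Fintype S] [DecidableEq S]
    (sd : S) (u : Fin n → S → ℝ) (hu : ∀ i s, 0 ≤ u i s) (hud : ∀ i, u i sd = 0)
    (α : ℝ) (hα0 : 0 < α) (hα1 : α ≤ 1)
    (t : ℕ)
    (z : ℕ → ℝ) (hz : ∀ i, 1 ≤ i → i < t → 0 ≤ z i)
    (xt : S → ℝ)
    (happrox : ∀ x : S → ℝ, IsDistribution x →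
      (∀ ℓ, 1 ≤ ℓ → ℓ < t → ∑ i ∈ Finset.Icc 1 ℓ, z i ≤ sumSmallest (expU u x) ℓ) →
      α * (sumSmallest (expU u x) t - ∑ i ∈ Finset.Ico 1 t, z i) ≤
        sumSmallest (expU u xt) t - ∑ i ∈ Finset.Ico 1 t, z i) :
    ∀ x : S → ℝ, InXle α sd x →
      (∀ ℓ, 1 ≤ ℓ → ℓ < t → ∑ i ∈ Finset.Icc 1 ℓ, z i ≤ sumSmallest (expU u x) ℓ) →
      sumSmallest (expU u x) t - ∑ i ∈ Finset.Ico 1 t, z i ≤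
        sumSmallest (expU u xt) t - ∑ i ∈ Finset.Ico 1 t, z i := by
  intro x hx hfeas
  have hE0 : ∀ i, 0 ≤ expU u x i := fun i =>
    Finset.sum_nonneg fun s _ => mul_nonneg (hx.1.1 s) (hu i s)
  have hα_inv : 1 ≤ α⁻¹ := one_le_inv₀ hα0 |>.mpr hα1
  have key := happrox (upg α sd x) (isDistribution_upg hα0 hx) fun ℓ hℓ1 hℓt => by
    rw [expU_upg hud]
    exact (hfeas ℓ hℓ1 hℓt).trans (sumSmallest_le_smul hE0 hα_inv ℓ)
  rw [expU_upg hud, sumSmallest_smul _ (zero_le_one.trans hα_inv), mul_sub, ← mul_assoc,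
    mul_inv_cancel₀ hα0.ne', one_mul] at key
  have hZ : 0 ≤ ∑ i ∈ Finset.Ico 1 t, z i :=
    Finset.sum_nonneg fun i hi => hz i (Finset.mem_Ico.mp hi).1 (Finset.mem_Ico.mp hi).2
  linarith [mul_le_of_le_one_left hZ hα1]

/-- an α-approximately-optimal solution for P1 also satisfies the
requirements of an α-shallow solver. -/
theorem stmt11 {n : ℕ} (hn : 1 ≤ n) {S : Type*} [Fintype S] [DecidableEq S]
    (sd : S) (u : Fin n → S → ℝ) (hu : ∀ i s, 0 ≤ u i s) (hud : ∀ i, u i sd = 0)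
    (α : ℝ) (hα0 : 0 < α) (hα1 : α ≤ 1)
    (t : ℕ) (ht1 : 1 ≤ t) (htn : t ≤ n)
    (z : ℕ → ℝ) (hz : ∀ i, 1 ≤ i → i < t → 0 ≤ z i)
    (xt : S → ℝ) (hxt : IsDistribution xt)
    (hfeas : ∀ ℓ, 1 ≤ ℓ → ℓ < t →
      ∑ i ∈ Finset.Icc 1 ℓ, z i ≤ sumSmallest (expU u xt) ℓ)
    (happrox : ∀ x : S → ℝ, IsDistribution x →
      (∀ ℓ, 1 ≤ ℓ → ℓ < t → ∑ i ∈ Finset.Icc 1 ℓ, z i ≤ sumSmallest (expU u x) ℓ) →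
      α * (sumSmallest (expU u x) t - ∑ i ∈ Finset.Ico 1 t, z i) ≤
        sumSmallest (expU u xt) t - ∑ i ∈ Finset.Ico 1 t, z i) :
    ∀ x : S → ℝ, InXle α sd x →
      (∀ ℓ, 1 ≤ ℓ → ℓ < t → ∑ i ∈ Finset.Icc 1 ℓ, z i ≤ sumSmallest (expU u x) ℓ) →
      sumSmallest (expU u x) t - ∑ i ∈ Finset.Ico 1 t, z i ≤
        sumSmallest (expU u xt) t - ∑ i ∈ Finset.Ico 1 t, z i :=
  stmt11_general sd u hu hud α hα0 hα1 t z hz xt happrox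
end

section
/- Let α ∈ (0,1] and suppose x^1 ∈ X satisfies E(x^1)^↑_1 ≥ E(x)^↑_1 for every x ∈ X_{≤α} (i.e., x^1 satisfies the requirements of an α-shallow solver for t = 1, where the objective is the smallest expected utility and there are no extra constraints). Then E(x^1)^↑_1 ≥ α·E(x)^↑_1 for every x ∈ X (i.e., x^1 satisfies the requirements of an α-approximately-optimal solver for t = 1). -/
/-!
Downgrading `x` — scaling its mass on the non-degenerate states by `α` and moving the rest
to `s_d` — gives a distribution in `X_{≤α}`, and since `u_i(s_d) = 0` it scales every agent's
expected utility, hence also the smallest one, by exactly `α`.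
-/

open Finset

lemma le_sortedVec_zero_iff {n : ℕ} (hn : 0 < n) (v : Fin n → ℝ) (a : ℝ) :
    a ≤ sortedVec v ⟨0, hn⟩ ↔ ∀ i, a ≤ v i := by
  refine ⟨fun h i => ?_, fun h => h _⟩
  obtain ⟨j, rfl⟩ := (Tuple.sort v).surjective i
  exact h.trans (Tuple.monotone_sort v (Fin.mk_le_of_le_val (Nat.zero_le _)))

lemma mul_sortedVec_zero_le {n : ℕ} (hn : 0 < n) (v : Fin n → ℝ) {c : ℝ} (hc : 0 ≤ c) :
    c * sortedVec v ⟨0, hn⟩ ≤ sortedVec (c • v) ⟨0, hn⟩ :=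
  (le_sortedVec_zero_iff hn _ _).2 fun i =>
    mul_le_mul_of_nonneg_left ((le_sortedVec_zero_iff hn v _).1 le_rfl i) hc

section Downgrade

variable {S : Type*} [Fintype S] [DecidableEq S] (α : ℝ) (sd : S) (x : S → ℝ)

lemma sum_erase_dng :
    ∑ j ∈ univ.erase sd, dng α sd x j = α * ∑ j ∈ univ.erase sd, x j := by
  rw [mul_sum]
  exact sum_congr rfl fun j hj => by simp [dng, ne_of_mem_erase hj]

lemma expU_dng {n : ℕ} (u : Fin n → S → ℝ) (hud : ∀ i, u i sd = 0) :
    expU u (dng α sd x) = α • expU u x := by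
  funext i
  simp only [expU, Pi.smul_apply, smul_eq_mul, mul_sum]
  refine sum_congr rfl fun s _ => ?_
  by_cases h : s = sd
  · simp [h, hud i]
  · simp [dng, h, mul_assoc]

variable {α x}

lemma inXle_dng (hα0 : 0 ≤ α) (hα1 : α ≤ 1) (hx : IsDistribution x) :
    InXle α sd (dng α sd x) := by
  obtain ⟨hx0, hx1⟩ := hx
  set T := ∑ j ∈ univ.erase sd, x j
  have hT1 : T ≤ 1 :=
    hx1 ▸ sum_le_sum_of_subset_of_nonneg (erase_subset _ _) fun j _ _ => hx0 j
  have hαT : α * T ≤ α := mul_le_of_le_one_right hα0 hT1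
  refine ⟨⟨fun s => ?_, ?_⟩, ?_⟩
  · by_cases h : s = sd
    · simp only [dng, h, if_true]
      nlinarith
    · simp only [dng, h, if_false]
      exact mul_nonneg hα0 (hx0 s)
  · rw [← add_sum_erase _ _ (mem_univ sd), sum_erase_dng]
    simp only [dng, if_true]
    ring
  · rwa [sum_erase_dng]

end Downgrade

theorem stmt12_general {n : ℕ} (hn : 0 < n) {S : Type*} [Fintype S] [DecidableEq S]
    (sd : S) (u : Fin n → S → ℝ) (hud : ∀ i, u i sd = 0)
    (α : ℝ) (hα0 : 0 < α) (hα1 : α ≤ 1)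
    (x1 : S → ℝ)
    (hshallow : ∀ x : S → ℝ, InXle α sd x →
      sortedVec (expU u x) ⟨0, hn⟩ ≤ sortedVec (expU u x1) ⟨0, hn⟩) :
    ∀ x : S → ℝ, IsDistribution x →
      α * sortedVec (expU u x) ⟨0, hn⟩ ≤ sortedVec (expU u x1) ⟨0, hn⟩ := by
  intro x hx
  calc α * sortedVec (expU u x) ⟨0, hn⟩
      ≤ sortedVec (α • expU u x) ⟨0, hn⟩ := mul_sortedVec_zero_le hn _ hα0.le
    _ = sortedVec (expU u (dng α sd x)) ⟨0, hn⟩ := by rw [expU_dng α sd x u hud]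
    _ ≤ sortedVec (expU u x1) ⟨0, hn⟩ := hshallow _ (inXle_dng sd hα0.le hα1 hx)

/-- for `t = 1`, a solution satisfying the α-shallow-solver
requirements also satisfies the α-approximately-optimal requirements. -/
theorem stmt12 {n : ℕ} (hn : 0 < n) {S : Type*} [Fintype S] [DecidableEq S]
    (sd : S) (u : Fin n → S → ℝ) (hu : ∀ i s, 0 ≤ u i s) (hud : ∀ i, u i sd = 0)
    (α : ℝ) (hα0 : 0 < α) (hα1 : α ≤ 1)
    (x1 : S → ℝ) (hx1 : IsDistribution x1)
    (hshallow : ∀ x : S → ℝ, InXle α sd x →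
      sortedVec (expU u x) ⟨0, hn⟩ ≤ sortedVec (expU u x1) ⟨0, hn⟩) :
    ∀ x : S → ℝ, IsDistribution x →
      α * sortedVec (expU u x) ⟨0, hn⟩ ≤ sortedVec (expU u x1) ⟨0, hn⟩ :=
  stmt12_general hn sd u hud α hα0 hα1 x1 hshallow
end
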